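/- arXiv:2111.02179 — 2 statements merged into one kernel-verified Lean document; each statement's English description precedes it below -/
import Mathlib

section
/- Let t be a Schröder tree with ℓ internal vertices and root r, and let 1 ≤ k ≤ ℓ. Then there is a bijection between the set Adm~_k(t) and the set of surjective strictly order-preserving maps f : sk(t) → {1,…,k} (i.e., surjections with f(v) < f(w) whenever v < w in the poset sk(t)). In particular |Adm~_k(t)| = ω_k(sk(t)). -/
open scoped BigOperators

/-- Planar rooted trees (rose trees). -/
inductive PTree : Type
  | node : List PTree → PTree

namespace PTree

/-- The single-vertex tree (a leaf). -/
abbrev leaf : PTree := .node []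

/-- Subtree at a given path from the root (entries select children). -/
def subtreeAt : List ℕ → PTree → Option PTree
  | [], t => some t
  | i :: p, node cs => (cs[i]?).bind (subtreeAt p)

/-- `p` is (the path of) a vertex of `t`. -/
def IsVertex (t : PTree) (p : List ℕ) : Prop := (subtreeAt p t).isSome

/-- `p` is a leaf of `t`. -/
def IsLeafAt (t : PTree) (p : List ℕ) : Prop := subtreeAt p t = some leaf

/-- `p` is an internal (non-leaf) vertex of `t`. -/
def IsInternalAt (t : PTree) (p : List ℕ) : Prop :=
  ∃ cs, subtreeAt p t = some (node cs) ∧ cs ≠ []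

/-- Schröder trees: every internal vertex has at least two children. -/
inductive IsSchroder : PTree → Prop
  | leaf : IsSchroder (node [])
  | node (cs : List PTree) : 2 ≤ cs.length → (∀ c ∈ cs, IsSchroder c) → IsSchroder (node cs)

/-- Number of leaves of a tree. -/
noncomputable def numLeaves (t : PTree) : ℕ := Nat.card {p : List ℕ // IsLeafAt t p}

/-- Number of sectors between consecutive leaves. -/
noncomputable def numSectors (t : PTree) : ℕ := numLeaves t - 1

/-- Number of internal vertices. -/
noncomputable def numInternal (t : PTree) : ℕ := Nat.card {p : List ℕ // IsInternalAt t p}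

/-- The set of Schröder trees with `n+1` leaves. -/
def ST (n : ℕ) : Set PTree := {t | IsSchroder t ∧ numLeaves t = n + 1}

/-- Number of surjective strictly order-preserving maps from the poset of internal
vertices of `t` (i.e. the vertex poset of the skeleton `sk(t)`, with the root minimal,
the order being the ancestor/prefix order) onto `{1, …, k}`. This is `ω_k(sk(t))`. -/
noncomputable def omegaSkK (t : PTree) (k : ℕ) : ℕ :=
  Nat.card {f : {p : List ℕ // IsInternalAt t p} → Fin k //
    Function.Surjective f ∧ ∀ v w, v.1 <+: w.1 → v ≠ w → f v < f w}

/-- The Murua coefficient `ω(sk(t))` of the skeleton of `t`. -/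
noncomputable def omegaSk (t : PTree) : ℂ :=
  ∑ k ∈ Finset.Icc 1 (numInternal t), ((-1 : ℂ) ^ (k + 1) / (k : ℂ)) * (omegaSkK t k : ℂ)

/-- The subtree of `t` at path `p` (junk value: a leaf). -/
noncomputable def subtree! (t : PTree) (p : List ℕ) : PTree := (subtreeAt p t).getD leaf

/-- Number of leaves of `t` strictly to the left of the subtree at `p`. -/
noncomputable def leavesBefore (t : PTree) (p : List ℕ) : ℕ :=
  Nat.card {q : List ℕ // IsLeafAt t q ∧ List.Lex (· < ·) q p ∧ ¬ p <+: q}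

/-- Sector number `i` (0-indexed: the sector between the `(i+1)`-st and `(i+2)`-nd leaves of `t`)
lies strictly inside the subtree of `t` rooted at `p`. -/
def SectorIn (t : PTree) (p : List ℕ) (i : ℕ) : Prop :=
  leavesBefore t p ≤ i ∧ i + 2 ≤ leavesBefore t p + numLeaves (subtree! t p)

/-- The internal vertex `v` of `t` owns sector `i`: the sector lies in the corolla at `v`,
i.e. inside the subtree at `v` but not inside the subtree at any strictly deeper vertex. -/
def OwnsSector (t : PTree) (v : List ℕ) (i : ℕ) : Prop :=
  IsInternalAt t v ∧ SectorIn t v i ∧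
    ∀ w, IsInternalAt t w → v <+: w → w ≠ v → ¬ SectorIn t w i

/-- Sectors `i` and `j` belong to the same block of the noncrossing partition `π(t)`. -/
def SameOwner (t : PTree) (i j : ℕ) : Prop := ∃ v, OwnsSector t v i ∧ OwnsSector t v j

open Classical in
/-- `φ_{π(t)}(a_1,…,a_n)`: the product over the blocks of the noncrossing partition `π(t)`
(one block per internal vertex `v`, consisting of the sectors owned by `v`) of `φ` applied to
the ordered product of the corresponding letters of `w`. -/
noncomputable def phiPi {A : Type*} [Ring A] (φ : A → ℂ) (t : PTree) (w : List A) : ℂ :=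
  ∏ᶠ v ∈ {v : List ℕ | IsInternalAt t v},
    φ ((((List.range w.length).filter fun i => OwnsSector t v i).map fun i => w.getD i 0).prod)

/-- A corolla: a root whose (at least two) children are all leaves. -/
def corolla (m : ℕ) : PTree := node (List.replicate m leaf)

/-- `t` is a corolla. -/
def IsCorolla (t : PTree) : Prop := ∃ m, 2 ≤ m ∧ t = corolla m

/-- Graft a tree `s` onto the leftmost leaf of `t`. -/
def graftLeftmost : PTree → PTree → PTree
  | node [], s => s
  | node (c :: cs), s => node (graftLeftmost c s :: cs)

/-- Trees obtained from the single-vertex tree by repeatedly grafting a corolla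
onto the leftmost leaf. -/
inductive IsBST : PTree → Prop
  | single : IsBST leaf
  | graft (t : PTree) (m : ℕ) : IsBST t → 2 ≤ m → IsBST (graftLeftmost t (corolla m))

/-- Schröder trees whose leftmost child of the root is a leaf. -/
def IsPST (t : PTree) : Prop := ∃ cs, t = node (leaf :: cs)

end PTree

namespace PTree

/-- The set of internal vertices of `t` (the vertex set of the skeleton `sk(t)`). -/
def skVertices (t : PTree) : Set (List ℕ) := {p | IsInternalAt t p}

/-- The set `Adm~_k(t)` of sequences `(c_1,…,c_{k−1})` of iterated general admissible cuts
of the skeleton `sk(t)`: setting `U_0 = sk(t)` (as a vertex set) and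
`U_j = U_{j-1} \ c_j` (the vertex set of the trunk `R_{c_j}` of the previous trunk),
each `c_j` is a nonempty general admissible cut of the `(j-1)`-st trunk whose pruning is a
forest of single-vertex trees (i.e. no vertex of the remaining trunk is a strict descendant
of a vertex of `c_j`), and the final trunk consists of the root alone. -/
def AdmSeq (t : PTree) (k : ℕ) : Type :=
  {c : Fin (k - 1) → Set (List ℕ) //
    (∀ j : Fin (k - 1),
      (c j).Nonempty ∧
      (c j ⊆ skVertices t \ (⋃ (i : Fin (k - 1)) (_ : i < j), c i)) ∧
      (∀ v ∈ c j, ∀ w ∈ skVertices t \ (⋃ (i : Fin (k - 1)) (_ : i < j), c i),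
        v <+: w → v ≠ w → False)) ∧
    skVertices t \ (⋃ j : Fin (k - 1), c j) = {([] : List ℕ)}}

end PTree

namespace PTree

lemma isInternalAt_nil {t : PTree} {p : List ℕ} (hp : IsInternalAt t p) :
    IsInternalAt t [] := by
  cases t with
  | node cs =>
    cases p with
    | nil => exact hp
    | cons i p' =>
      obtain ⟨ds, hds, -⟩ := hp
      simp only [subtreeAt] at hds
      cases h : cs[i]? with
      | none => rw [h] at hds; simp at hds
      | some c =>
        refine ⟨cs, rfl, ?_⟩
        rintro rfl
        simp at h

open Classical in
/-- Level function associated to a sequence of cuts. -/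
noncomputable def admLevel (k : ℕ) (hk1 : 1 ≤ k) (c : Fin (k - 1) → Set (List ℕ))
    (p : List ℕ) : Fin k :=
  if h : ∃ j, p ∈ c j then ⟨k - 1 - (h.choose : ℕ), by omega⟩ else ⟨0, hk1⟩

lemma admLevel_of_mem {k : ℕ} (hk1 : 1 ≤ k) {c : Fin (k - 1) → Set (List ℕ)}
    (hdisj : ∀ ⦃i j : Fin (k - 1)⦄ ⦃v : List ℕ⦄, v ∈ c i → v ∈ c j → i = j)
    {p : List ℕ} {j : Fin (k - 1)} (hj : p ∈ c j) :
    (admLevel k hk1 c p : ℕ) = k - 1 - (j : ℕ) := by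
  have h : ∃ j, p ∈ c j := ⟨j, hj⟩
  rw [admLevel, dif_pos h]
  have : h.choose = j := hdisj h.choose_spec hj
  simp [this]

lemma admLevel_of_not_mem {k : ℕ} (hk1 : 1 ≤ k) {c : Fin (k - 1) → Set (List ℕ)}
    {p : List ℕ} (hp : ∀ j, p ∉ c j) :
    (admLevel k hk1 c p : ℕ) = 0 := by
  rw [admLevel, dif_neg (by push_neg; exact hp)]

end PTree

/-- Let `t` be a Schröder tree with `ℓ` internal vertices and let
`1 ≤ k ≤ ℓ`. Then `Adm~_k(t)` is in bijection with the set of surjective strictly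
order-preserving maps `sk(t) → {1,…,k}` (the poset of internal vertices of `t`, ordered by
the ancestor relation with the root minimal); in particular `|Adm~_k(t)| = ω_k(sk(t))`. -/
theorem admSeq_equiv_surjective_order_preserving
    (t : PTree) (ht : PTree.IsSchroder t) (k : ℕ)
    (hk1 : 1 ≤ k) (hkl : k ≤ PTree.numInternal t) :
    Nonempty (PTree.AdmSeq t k ≃
      {f : {p : List ℕ // PTree.IsInternalAt t p} → Fin k //
        Function.Surjective f ∧ ∀ v w, v.1 <+: w.1 → v ≠ w → f v < f w}) ∧
    Nat.card (PTree.AdmSeq t k) = PTree.omegaSkK t k := by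
  classical
  -- disjointness of cuts for any admissible sequence
  have disj : ∀ (c : Fin (k - 1) → Set (List ℕ)),
      (∀ j : Fin (k - 1),
        c j ⊆ PTree.skVertices t \ (⋃ (i : Fin (k - 1)) (_ : i < j), c i)) →
      ∀ ⦃i j : Fin (k - 1)⦄ ⦃v : List ℕ⦄, v ∈ c i → v ∈ c j → i = j := by
    intro c hsub i j v hi hj
    by_contra hne
    rcases lt_or_gt_of_ne hne with h | h
    · exact (hsub j hj).2 (by simp only [Set.mem_iUnion]; exact ⟨i, h, hi⟩)
    · exact (hsub i hi).2 (by simp only [Set.mem_iUnion]; exact ⟨j, h, hj⟩)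
  have e : PTree.AdmSeq t k ≃
      {f : {p : List ℕ // PTree.IsInternalAt t p} → Fin k //
        Function.Surjective f ∧ ∀ v w, v.1 <+: w.1 → v ≠ w → f v < f w} := by
    refine ⟨fun a => ⟨fun v => PTree.admLevel k hk1 a.1 v.1, ?_, ?_⟩,
      fun F => ⟨fun j => {p | ∃ h : PTree.IsInternalAt t p,
        (F.1 ⟨p, h⟩ : ℕ) = k - 1 - (j : ℕ)}, ?_, ?_⟩, ?_, ?_⟩
    -- surjectivity of the level function of an admissible sequence
    · obtain ⟨c, hc, hlast⟩ := a
      have hdisj := disj c fun j => (hc j).2.1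
      have hroot : ([] : List ℕ) ∈ PTree.skVertices t \ ⋃ j, c j := by rw [hlast]; rfl
      have hrootNot : ∀ j, ([] : List ℕ) ∉ c j := fun j hj =>
        hroot.2 (Set.mem_iUnion.mpr ⟨j, hj⟩)
      intro m
      by_cases hm : (m : ℕ) = 0
      · refine ⟨⟨[], hroot.1⟩, Fin.ext ?_⟩
        rw [PTree.admLevel_of_not_mem hk1 hrootNot, hm]
      · have hmlt := m.isLt
        have hj : k - 1 - (m : ℕ) < k - 1 := by omega
        obtain ⟨p, hp⟩ := (hc ⟨k - 1 - (m : ℕ), hj⟩).1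
        refine ⟨⟨p, ((hc ⟨k - 1 - (m : ℕ), hj⟩).2.1 hp).1⟩, Fin.ext ?_⟩
        rw [PTree.admLevel_of_mem hk1 hdisj hp]
        simp only
        omega
    -- strict order preservation
    · obtain ⟨c, hc, hlast⟩ := a
      have hdisj := disj c fun j => (hc j).2.1
      intro v w hpre hne
      have hvw : v.1 ≠ w.1 := fun h => hne (Subtype.ext h)
      rw [Fin.lt_def]
      by_cases hw : ∃ i, w.1 ∈ c i
      · obtain ⟨i, hwi⟩ := hw
        rw [PTree.admLevel_of_mem hk1 hdisj hwi]
        by_cases hv : ∃ j, v.1 ∈ c j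
        · obtain ⟨j, hvj⟩ := hv
          rw [PTree.admLevel_of_mem hk1 hdisj hvj]
          have hwin : w.1 ∈ ⋃ (i' : Fin (k - 1)) (_ : i' < j), c i' := by
            by_contra hno
            exact (hc j).2.2 v.1 hvj w.1 ⟨w.2, hno⟩ hpre hvw
          simp only [Set.mem_iUnion] at hwin
          obtain ⟨i', hi'lt, hwi'⟩ := hwin
          have hii : i' = i := hdisj hwi' hwi
          subst hii
          have h1 : (i' : ℕ) < (j : ℕ) := hi'lt
          have := j.isLt
          omega
        · push_neg at hv
          rw [PTree.admLevel_of_not_mem hk1 hv]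
          have := i.isLt
          omega
      · push_neg at hw
        exfalso
        have hwnil : w.1 = [] := by
          have : w.1 ∈ ({([] : List ℕ)} : Set (List ℕ)) := by
            rw [← hlast]
            exact ⟨w.2, by simp only [Set.mem_iUnion]; rintro ⟨j, hj⟩; exact hw j hj⟩
          simpa using this
        rw [hwnil] at hpre hvw
        exact hvw (List.prefix_nil.mp hpre)
    -- the cuts attached to f satisfy the admissibility conditions
    · obtain ⟨f, hsurj, hord⟩ := F
      intro j
      refine ⟨?_, ?_, ?_⟩
      · obtain ⟨v, hv⟩ := hsurj ⟨k - 1 - (j : ℕ), by omega⟩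
        refine ⟨v.1, v.2, ?_⟩
        show (f v : ℕ) = k - 1 - (j : ℕ)
        rw [hv]
      · rintro p ⟨h, hval⟩
        refine ⟨h, ?_⟩
        simp only [Set.mem_iUnion]
        rintro ⟨i, hilt, h', hval'⟩
        have hij : (i : ℕ) < (j : ℕ) := hilt
        have heq : (k : ℕ) - 1 - (i : ℕ) = k - 1 - (j : ℕ) := hval'.symm.trans hval
        have := i.isLt
        have := j.isLt
        omega
      · rintro v ⟨hvint, hvval⟩ w ⟨hwint, hwnot⟩ hpre hvw
        have hlt := hord ⟨v, hvint⟩ ⟨w, hwint⟩ hpre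
          (fun h => hvw (congrArg Subtype.val h))
        rw [Fin.lt_def, hvval] at hlt
        have hmlt := (f ⟨w, hwint⟩).isLt
        have hjlt := j.isLt
        have hj' : k - 1 - (f ⟨w, hwint⟩ : ℕ) < k - 1 := by omega
        apply hwnot
        simp only [Set.mem_iUnion]
        refine ⟨⟨k - 1 - (f ⟨w, hwint⟩ : ℕ), hj'⟩, ?_, hwint, ?_⟩
        · show k - 1 - (f ⟨w, hwint⟩ : ℕ) < (j : ℕ)
          omega
        · show (f ⟨w, hwint⟩ : ℕ) = k - 1 - (k - 1 - (f ⟨w, hwint⟩ : ℕ))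
          omega
    -- the final trunk is the root
    · obtain ⟨f, hsurj, hord⟩ := F
      obtain ⟨v0, hv0⟩ := hsurj ⟨0, hk1⟩
      have hrootInt : PTree.IsInternalAt t [] := PTree.isInternalAt_nil v0.2
      have hfroot : (f ⟨[], hrootInt⟩ : ℕ) = 0 := by
        by_cases h : v0 = ⟨[], hrootInt⟩
        · rw [← h, hv0]
        · have := hord ⟨[], hrootInt⟩ v0 List.nil_prefix fun h' => h h'.symm
          rw [Fin.lt_def, hv0] at this
          simpa using this
      ext p
      simp only [Set.mem_diff, Set.mem_iUnion, Set.mem_singleton_iff, Set.mem_setOf_eq]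
      constructor
      · rintro ⟨hint, hnot⟩
        push_neg at hnot
        have hint' : PTree.IsInternalAt t p := hint
        have hm : (f ⟨p, hint'⟩ : ℕ) = 0 := by
          by_contra h0
          have hmlt := (f ⟨p, hint'⟩).isLt
          have hj : k - 1 - (f ⟨p, hint'⟩ : ℕ) < k - 1 := by omega
          refine absurd ?_ (hnot ⟨k - 1 - (f ⟨p, hint'⟩ : ℕ), hj⟩ hint')
          show (f ⟨p, hint'⟩ : ℕ) = k - 1 - (k - 1 - (f ⟨p, hint'⟩ : ℕ))
          omega
        by_contra hpne
        have := hord ⟨[], hrootInt⟩ ⟨p, hint'⟩ List.nil_prefix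
          (fun h => hpne (congrArg Subtype.val h).symm)
        rw [Fin.lt_def, hfroot, hm] at this
        omega
      · rintro rfl
        refine ⟨hrootInt, ?_⟩
        rintro ⟨j, hint', hval⟩
        have h0 : (0 : ℕ) = k - 1 - (j : ℕ) := hfroot.symm.trans hval
        have := j.isLt
        omega
    -- left inverse
    · rintro ⟨c, hc, hlast⟩
      have hdisj := disj c fun j => (hc j).2.1
      apply Subtype.ext
      funext j
      ext p
      simp only [Set.mem_setOf_eq]
      constructor
      · rintro ⟨h, hval⟩
        by_cases hmem : ∃ j', p ∈ c j'
        · obtain ⟨j', hj'⟩ := hmem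
          rw [PTree.admLevel_of_mem hk1 hdisj hj'] at hval
          have hjj : j' = j := by
            apply Fin.ext
            have := j.isLt
            have := j'.isLt
            omega
          exact hjj ▸ hj'
        · push_neg at hmem
          rw [PTree.admLevel_of_not_mem hk1 hmem] at hval
          have := j.isLt
          omega
      · intro hp
        exact ⟨((hc j).2.1 hp).1, by rw [PTree.admLevel_of_mem hk1 hdisj hp]⟩
    -- right inverse
    · rintro ⟨f, hsurj, hord⟩
      apply Subtype.ext
      funext v
      apply Fin.ext
      show (PTree.admLevel k hk1
        (fun j => {p | ∃ h : PTree.IsInternalAt t p,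
          (f ⟨p, h⟩ : ℕ) = k - 1 - (j : ℕ)}) v.1 : ℕ) = (f v : ℕ)
      have hdisjF : ∀ ⦃i j : Fin (k - 1)⦄ ⦃p : List ℕ⦄,
          p ∈ (fun j => {p | ∃ h : PTree.IsInternalAt t p,
            (f ⟨p, h⟩ : ℕ) = k - 1 - (j : ℕ)}) i →
          p ∈ (fun j => {p | ∃ h : PTree.IsInternalAt t p,
            (f ⟨p, h⟩ : ℕ) = k - 1 - (j : ℕ)}) j → i = j := by
        rintro i j p ⟨h1, hv1⟩ ⟨h2, hv2⟩
        apply Fin.ext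
        have heq : (k : ℕ) - 1 - (i : ℕ) = k - 1 - (j : ℕ) := hv1.symm.trans hv2
        have := i.isLt
        have := j.isLt
        omega
      by_cases hm : (f v : ℕ) = 0
      · have hno : ∀ j : Fin (k - 1), v.1 ∉ (fun j => {p | ∃ h : PTree.IsInternalAt t p,
            (f ⟨p, h⟩ : ℕ) = k - 1 - (j : ℕ)}) j := by
          rintro j ⟨h, hval⟩
          have h0 : (f v : ℕ) = k - 1 - (j : ℕ) := hval
          have := j.isLt
          omega
        rw [PTree.admLevel_of_not_mem hk1 hno, hm]
      · have hmlt := (f v).isLt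
        have hj : k - 1 - (f v : ℕ) < k - 1 := by omega
        have hmem : v.1 ∈ (fun j : Fin (k - 1) => {p | ∃ h : PTree.IsInternalAt t p,
            (f ⟨p, h⟩ : ℕ) = k - 1 - (j : ℕ)}) ⟨k - 1 - (f v : ℕ), hj⟩ := by
          refine ⟨v.2, ?_⟩
          show (f v : ℕ) = k - 1 - (k - 1 - (f v : ℕ))
          omega
        rw [PTree.admLevel_of_mem hk1 hdisjF hmem]
        simp only
        omega
  exact ⟨⟨e⟩, Nat.card_congr e⟩
end

section
/- For every n ≥ 1, the map t ↦ π(t) is a bijection from BST(n) onto the set Int(n) of interval partitions of [n], and for every t ∈ BST(n) the number of internal vertices satisfies i(t) = |π(t)| (the number of blocks of π(t)). -/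
open scoped BigOperators

section Partitions

open scoped BigOperators

/-- Set partitions of `[n] = {1,…,n}`, modeled as finpartitions of `Fin n`. -/
abbrev NPart (n : ℕ) := Finpartition (Finset.univ : Finset (Fin n))

/-- Noncrossing partitions: there are no `a < b < c < d` with `a, c` in one block and
`b, d` in a different block. -/
def IsNoncrossing {n : ℕ} (π : NPart n) : Prop :=
  ∀ a b c d : Fin n, a < b → b < c → c < d →
    ∀ V ∈ π.parts, ∀ W ∈ π.parts, a ∈ V → c ∈ V → b ∈ W → d ∈ W → V = W

/-- Interval partitions: every block is an interval of consecutive elements. -/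
def IsIntervalPart {n : ℕ} (π : NPart n) : Prop :=
  ∀ V ∈ π.parts, ∀ x ∈ V, ∀ y ∈ V, ∀ z : Fin n, x ≤ z → z ≤ y → z ∈ V

/-- Irreducible noncrossing partitions: `1` and `n` lie in the same block. -/
def IsIrreducibleNC {n : ℕ} (π : NPart n) : Prop :=
  ∃ V ∈ π.parts, (∀ i : Fin n, i.val = 0 → i ∈ V) ∧ (∀ i : Fin n, i.val = n - 1 → i ∈ V)

/-- `W` is nested in `V`: every element of `W` lies in the interval `[min V, max V]`. -/
def NestedIn {n : ℕ} (W V : Finset (Fin n)) : Prop :=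
  ∀ w ∈ W, (∃ a ∈ V, a ≤ w) ∧ (∃ b ∈ V, w ≤ b)

open Classical in
/-- The forest factorial `t(π)!` of the forest of nestings of `π`: the product, over all
blocks `V`, of the number of blocks nested in `V` (the size of the subtree rooted at `V`). -/
noncomputable def forestFactorial {n : ℕ} (π : NPart n) : ℕ :=
  ∏ V ∈ π.parts, (π.parts.filter fun W => NestedIn W V).card

/-- `f_π(a_1,…,a_n)`: the product over the blocks `V = {i_1 < … < i_s}` of `π` of
`f(a_{i_1},…,a_{i_s})`, for a family of multilinear functionals encoded as `f : List A → ℂ`. -/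
noncomputable def blockApply {A : Type*} {n : ℕ} (f : List A → ℂ) (a : Fin n → A)
    (π : NPart n) : ℂ :=
  ∏ V ∈ π.parts, f ((V.sort (· ≤ ·)).map a)

/-- `φ_π(a_1,…,a_n)` for the moment functionals `φ_m(a_1,…,a_m) = φ(a_1 ⋯ a_m)`. -/
noncomputable def momApply {A : Type*} [Ring A] {n : ℕ} (φ : A → ℂ) (a : Fin n → A)
    (π : NPart n) : ℂ :=
  blockApply (fun l => φ l.prod) a π

/-- `ω_k(t(π))` for the nesting poset of the blocks of `π` (for irreducible `π`, this is
the vertex poset of the tree of nestings, rooted at the outermost block): the number of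
surjective strictly order-preserving maps onto `{1,…,k}`. -/
noncomputable def omegaNestK {n : ℕ} (π : NPart n) (k : ℕ) : ℕ :=
  Nat.card {f : {V // V ∈ π.parts} → Fin k // Function.Surjective f ∧
    ∀ V W : {V // V ∈ π.parts}, NestedIn W.1 V.1 → V ≠ W → f V < f W}

/-- The Murua coefficient `ω(t(π))` of the tree (forest) of nestings of `π`. -/
noncomputable def omegaNest {n : ℕ} (π : NPart n) : ℂ :=
  ∑ k ∈ Finset.Icc 1 π.parts.card, ((-1 : ℂ) ^ (k + 1) / (k : ℂ)) * (omegaNestK π k : ℂ)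

/-- The noncrossing partition `π(t)` associated to a Schröder tree `t ∈ ST(n)` equals `π`:
two sectors lie in the same block of `π(t)` (i.e. have the same owning internal vertex)
iff they lie in the same block of `π`. -/
def TreePartEq {n : ℕ} (t : PTree) (π : NPart n) : Prop :=
  ∀ i j : Fin n, PTree.SameOwner t i.val j.val ↔ ∃ V ∈ π.parts, i ∈ V ∧ j ∈ V

/-- The moment–cumulant relation defining the monotone cumulants `h`. -/
def MonotoneMC {A : Type*} [Ring A] (φ : A → ℂ) (h : List A → ℂ) : Prop :=
  ∀ (m : ℕ), 1 ≤ m → ∀ a : Fin m → A,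
    φ (List.ofFn a).prod =
      ∑ᶠ π ∈ {π : NPart m | IsNoncrossing π}, (forestFactorial π : ℂ)⁻¹ * blockApply h a π

/-- The moment–cumulant relation defining the free cumulants `r`. -/
def FreeMC {A : Type*} [Ring A] (φ : A → ℂ) (r : List A → ℂ) : Prop :=
  ∀ (m : ℕ), 1 ≤ m → ∀ a : Fin m → A,
    φ (List.ofFn a).prod = ∑ᶠ π ∈ {π : NPart m | IsNoncrossing π}, blockApply r a π

/-- The moment–cumulant relation defining the Boolean cumulants `b`. -/
def BooleanMC {A : Type*} [Ring A] (φ : A → ℂ) (b : List A → ℂ) : Prop :=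
  ∀ (m : ℕ), 1 ≤ m → ∀ a : Fin m → A,
    φ (List.ofFn a).prod = ∑ᶠ π ∈ {π : NPart m | IsIntervalPart π}, blockApply b a π

end Partitions

namespace BSTProof
open PTree

def spine : List ℕ → PTree
  | [] => leaf
  | a :: as => .node (spine as :: List.replicate a leaf)

lemma subtreeAt_nil (t : PTree) : subtreeAt [] t = some t := rfl

lemma subtreeAt_leaf_cons (i : ℕ) (p : List ℕ) : subtreeAt (i :: p) leaf = none := by
  simp [subtreeAt]

lemma isLeafAt_leaf_iff (q : List ℕ) : IsLeafAt leaf q ↔ q = [] := by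
  cases q with
  | nil => simp [IsLeafAt, subtreeAt]
  | cons i p => simp [IsLeafAt, subtreeAt_leaf_cons]

lemma isInternalAt_leaf_iff (q : List ℕ) : ¬ IsInternalAt leaf q := by
  cases q with
  | nil => rintro ⟨cs, h, hne⟩; simp [subtreeAt] at h; simp [h.symm] at hne
  | cons i p => rintro ⟨cs, h, hne⟩; rw [subtreeAt_leaf_cons] at h; exact absurd h (by simp)

lemma subtreeAt_node_cons (cs : List PTree) (i : ℕ) (p : List ℕ) :
    subtreeAt (i :: p) (.node cs) = (cs[i]?).bind (subtreeAt p) := rfl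

lemma isLeafAt_spine (as : List ℕ) (q : List ℕ) :
    IsLeafAt (spine as) q ↔ q = List.replicate as.length 0 ∨
      ∃ d j, d < as.length ∧ j + 1 ≤ as.getD d 0 ∧ q = List.replicate d 0 ++ [j + 1] := by
  induction as generalizing q with
  | nil =>
    rw [show spine [] = leaf from rfl, isLeafAt_leaf_iff]
    simp
  | cons a as ih =>
    rw [show spine (a :: as) = .node (spine as :: List.replicate a leaf) from rfl]
    cases q with
    | nil =>
      simp only [IsLeafAt, subtreeAt_nil, Option.some.injEq]
      constructor
      · intro h; exact absurd h (by simp [leaf])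
      · rintro (h | ⟨d, j, hd, hj, h⟩)
        · exact absurd h (by simp [List.replicate_succ])
        · exact absurd h (by simp)
    | cons i p =>
      rw [IsLeafAt, subtreeAt_node_cons]
      cases i with
      | zero =>
        simp only [List.getElem?_cons_zero, Option.bind_some]
        rw [show (subtreeAt p (spine as) = some leaf) ↔ IsLeafAt (spine as) p from Iff.rfl, ih]
        constructor
        · rintro (h | ⟨d, j, hd, hj, h⟩)
          · left; rw [h, List.length_cons, List.replicate_succ]
          · right; exact ⟨d + 1, j, by simpa using hd, by simpa using hj,
              by rw [h, List.replicate_succ]; rfl⟩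
        · rintro (h | ⟨d, j, hd, hj, h⟩)
          · left
            rw [List.length_cons, List.replicate_succ] at h
            exact (List.cons.injEq _ _ _ _).mp h |>.2
          · right
            cases d with
            | zero => simp [List.replicate] at h
            | succ d' =>
              rw [List.replicate_succ] at h
              refine ⟨d', j, by simpa using hd, by simpa using hj, ?_⟩
              exact (List.cons.injEq _ _ _ _).mp h |>.2
      | succ i' =>
        simp only [List.getElem?_cons_succ, List.getElem?_replicate]
        by_cases hi : i' < a
        · simp only [hi, if_pos, Option.bind_some]
          rw [show (subtreeAt p leaf = some leaf) ↔ IsLeafAt leaf p from Iff.rfl,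
            isLeafAt_leaf_iff]
          constructor
          · intro h
            right; exact ⟨0, i', by simp, by simpa using hi, by simp [h]⟩
          · rintro (h | ⟨d, j, hd, hj, h⟩)
            · exfalso; rw [List.length_cons, List.replicate_succ] at h
              exact absurd ((List.cons.injEq _ _ _ _).mp h).1 (by omega)
            · cases d with
              | zero =>
                simp only [List.replicate, List.nil_append, List.cons.injEq] at h
                exact h.2
              | succ d' =>
                rw [List.replicate_succ] at h
                exact absurd ((List.cons.injEq _ _ _ _).mp h).1 (by omega)
        · simp only [if_neg hi, Option.bind_none]
          constructor
          · intro h; exact absurd h (by simp)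
          · rintro (h | ⟨d, j, hd, hj, h⟩)
            · exfalso; rw [List.length_cons, List.replicate_succ] at h
              exact absurd ((List.cons.injEq _ _ _ _).mp h).1 (by omega)
            · cases d with
              | zero =>
                exfalso
                simp only [List.replicate, List.nil_append, List.cons.injEq] at h
                simp only [List.getD_cons_zero] at hj
                omega
              | succ d' =>
                exfalso; rw [List.replicate_succ] at h
                exact absurd ((List.cons.injEq _ _ _ _).mp h).1 (by omega)

lemma isInternalAt_spine (as : List ℕ) (q : List ℕ) :
    IsInternalAt (spine as) q ↔ ∃ d, d < as.length ∧ q = List.replicate d 0 := by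
  induction as generalizing q with
  | nil => simpa [spine] using isInternalAt_leaf_iff q
  | cons a as ih =>
    rw [show spine (a :: as) = .node (spine as :: List.replicate a leaf) from rfl]
    cases q with
    | nil =>
      simp only [IsInternalAt, subtreeAt_nil, Option.some.injEq]
      constructor
      · intro _; exact ⟨0, by simp, rfl⟩
      · intro _; exact ⟨spine as :: List.replicate a leaf, rfl, by simp⟩
    | cons i p =>
      rw [IsInternalAt]
      simp only [subtreeAt_node_cons]
      cases i with
      | zero =>
        simp only [List.getElem?_cons_zero, Option.bind_some]
        rw [show (∃ cs, subtreeAt p (spine as) = some (.node cs) ∧ cs ≠ []) ↔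
          IsInternalAt (spine as) p from Iff.rfl, ih]
        constructor
        · rintro ⟨d, hd, h⟩
          exact ⟨d + 1, by simpa using hd, by rw [List.replicate_succ, h]⟩
        · rintro ⟨d, hd, h⟩
          cases d with
          | zero => simp [List.replicate] at h
          | succ d' =>
            rw [List.replicate_succ] at h
            exact ⟨d', by simpa using hd, ((List.cons.injEq _ _ _ _).mp h).2⟩
      | succ i' =>
        simp only [List.getElem?_cons_succ, List.getElem?_replicate]
        constructor
        · by_cases hi : i' < a
          · simp only [hi, if_pos, Option.bind_some]
            intro h
            exact absurd h (isInternalAt_leaf_iff p)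
          · simp only [if_neg hi, Option.bind_none]
            rintro ⟨cs, h, -⟩; exact absurd h (by simp)
        · rintro ⟨d, hd, h⟩
          cases d with
          | zero => simp [List.replicate] at h
          | succ d' =>
            exfalso; rw [List.replicate_succ] at h
            exact absurd ((List.cons.injEq _ _ _ _).mp h).1 (by omega)


lemma numLeaves_spine (as : List ℕ) : (spine as).numLeaves = 1 + as.sum := by
  have e : Option ((d : Fin as.length) × Fin as[d.1]) ≃ {q // IsLeafAt (spine as) q} := by
    refine Equiv.ofBijective (fun x => x.elim
      ⟨List.replicate as.length 0, (isLeafAt_spine as _).mpr (Or.inl rfl)⟩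
      (fun y => ⟨List.replicate y.1.1 0 ++ [y.2.1 + 1], (isLeafAt_spine as _).mpr
        (Or.inr ⟨y.1.1, y.2.1, y.1.isLt, by
          rw [List.getD_eq_getElem as 0 y.1.isLt]; omega, rfl⟩)⟩) ) ⟨?_, ?_⟩
    · rintro (_ | ⟨d, j⟩) (_ | ⟨d', j'⟩) h <;>
        simp only [Option.elim, Subtype.mk.injEq] at h
      · rfl
      · exfalso
        have h2 := congrArg (fun l => l[d'.1]?) h
        simp [List.getElem?_replicate, d'.isLt, List.getElem?_append_right] at h2
      · exfalso
        have h2 := congrArg (fun l => l[d.1]?) h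
        simp [List.getElem?_replicate, d.isLt, List.getElem?_append_right] at h2
      · have hl := congrArg List.length h
        simp only [List.length_append, List.length_replicate, List.length_cons,
          List.length_nil] at hl
        have hd : d.1 = d'.1 := by omega
        have hdd : d = d' := Fin.ext hd
        subst hdd
        have := List.append_cancel_left h
        simp only [List.cons.injEq] at this
        have hj : j = j' := Fin.ext (by omega)
        subst hj; rfl
    · rintro ⟨q, hq⟩
      rcases (isLeafAt_spine as q).mp hq with h | ⟨d, j, hd, hj, h⟩
      · exact ⟨none, by simp [Option.elim, h]⟩
      · refine ⟨some ⟨⟨d, hd⟩, ⟨j, ?_⟩⟩, by simp [Option.elim, h]⟩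
        rw [List.getD_eq_getElem as 0 hd] at hj; show j < as[d]; omega
  rw [numLeaves, ← Nat.card_congr e, Nat.card_eq_fintype_card, Fintype.card_option,
    Fintype.card_sigma]
  simp only [Fintype.card_fin]
  rw [← List.sum_ofFn, List.ofFn_getElem]
  omega

lemma numInternal_spine (as : List ℕ) : (spine as).numInternal = as.length := by
  have e : Fin as.length ≃ {p // IsInternalAt (spine as) p} := by
    refine Equiv.ofBijective (fun d => ⟨List.replicate d.1 0,
      (isInternalAt_spine as _).mpr ⟨d.1, d.isLt, rfl⟩⟩) ⟨?_, ?_⟩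
    · intro d d' h
      simp only [Subtype.mk.injEq] at h
      have := congrArg List.length h
      simpa using Fin.ext (by simpa using this)
    · rintro ⟨p, hp⟩
      obtain ⟨d, hd, rfl⟩ := (isInternalAt_spine as p).mp hp
      exact ⟨⟨d, hd⟩, rfl⟩
  rw [numInternal, ← Nat.card_congr e, Nat.card_eq_fintype_card, Fintype.card_fin]

lemma subtree!_node_cons (c : PTree) (cs : List PTree) (p : List ℕ) :
    subtree! (.node (c :: cs)) (0 :: p) = subtree! c p := by
  simp [subtree!, subtreeAt_node_cons]

lemma subtree!_spine (d : ℕ) (as : List ℕ) :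
    subtree! (spine as) (List.replicate d 0) = spine (as.drop d) := by
  induction d generalizing as with
  | zero => simp [subtree!, subtreeAt]
  | succ d ih =>
    cases as with
    | nil =>
      rw [List.replicate_succ]
      show subtree! leaf _ = _
      simp [subtree!, subtreeAt_leaf_cons]
      rfl
    | cons a as =>
      rw [List.replicate_succ, show spine (a :: as) = .node (spine as :: List.replicate a leaf)
        from rfl, subtree!_node_cons, List.drop_succ_cons]
      exact ih as

lemma not_lex_low (e d j : ℕ) (r : List ℕ) (h : e < d) :
    ¬ List.Lex (· < ·) (List.replicate e 0 ++ (j + 1) :: r) (List.replicate d 0) := by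
  induction e generalizing d with
  | zero =>
    cases d with
    | zero => omega
    | succ d =>
      intro hl
      rw [List.replicate_succ] at hl
      simp only [List.replicate, List.nil_append] at hl
      cases hl with
      | rel h' => omega
  | succ e ih =>
    cases d with
    | zero => omega
    | succ d =>
      intro hl
      rw [List.replicate_succ, List.replicate_succ, List.cons_append] at hl
      cases hl with
      | rel h' => omega
      | cons h' => exact ih d (by omega) h'

lemma replicate_prefix_replicate {d e : ℕ} (h : d ≤ e) :
    List.replicate d (0 : ℕ) <+: List.replicate e 0 :=
  ⟨List.replicate (e - d) 0, by rw [← List.replicate_add]; congr 1; omega⟩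

lemma leavesBefore_spine (as : List ℕ) (d : ℕ) (hd : d ≤ as.length) :
    leavesBefore (spine as) (List.replicate d 0) = 0 := by
  have : IsEmpty {q : List ℕ // IsLeafAt (spine as) q ∧
      List.Lex (· < ·) q (List.replicate d 0) ∧ ¬ List.replicate d 0 <+: q} := by
    constructor
    rintro ⟨q, hq, hlex, hpre⟩
    rcases (isLeafAt_spine as q).mp hq with h | ⟨e, j, he, hj, h⟩
    · subst h
      exact hpre (replicate_prefix_replicate hd)
    · subst h
      by_cases hde : d ≤ e
      · refine hpre ⟨List.replicate (e - d) 0 ++ [j + 1], ?_⟩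
        rw [← List.append_assoc, ← List.replicate_add]
        congr 2
        omega
      · exact not_lex_low e d j [] (by omega) hlex
  rw [leavesBefore, Nat.card_of_isEmpty]

lemma sectorIn_spine (as : List ℕ) (d i : ℕ) (hd : d ≤ as.length) :
    SectorIn (spine as) (List.replicate d 0) i ↔ i + 1 ≤ (as.drop d).sum := by
  rw [SectorIn, leavesBefore_spine as d hd, subtree!_spine, numLeaves_spine]
  omega

lemma sum_drop_antitone (as : List ℕ) {d e : ℕ} (h : d ≤ e) :
    (as.drop e).sum ≤ (as.drop d).sum := by
  induction e with
  | zero => have h0 : d = 0 := Nat.le_zero.mp h; subst h0; rfl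
  | succ e ih =>
    rcases Nat.lt_or_ge d (e + 1) with h' | h'
    · have h1 : (as.drop (e + 1)).sum ≤ (as.drop e).sum := by
        have : as.drop (e + 1) = (as.drop e).drop 1 := by
          rw [List.drop_drop]
        rw [this]
        cases as.drop e with
        | nil => simp
        | cons b bs => simp
      rcases Nat.lt_or_ge d e with h'' | h''
      · exact le_trans h1 (ih (by omega))
      · have : d = e := by omega
        subst this; exact h1
    · have : d = e + 1 := by omega
      subst this; rfl

lemma exists_owner (as : List ℕ) (i : ℕ) (hi : i < as.sum) :
    ∃ d, d < as.length ∧ (as.drop (d + 1)).sum ≤ i ∧ i < (as.drop d).sum := by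
  induction as with
  | nil => simp at hi
  | cons a as ih =>
    by_cases h : as.sum ≤ i
    · exact ⟨0, by simp, by simpa using h, by simpa using hi⟩
    · obtain ⟨d, hd, h1, h2⟩ := ih (by omega)
      exact ⟨d + 1, by simpa using hd, by simpa using h1, by simpa using h2⟩

lemma owner_unique (as : List ℕ) {d e i : ℕ} (hd : d < as.length) (he : e < as.length)
    (h1 : (as.drop (d + 1)).sum ≤ i) (h2 : i < (as.drop d).sum)
    (h3 : (as.drop (e + 1)).sum ≤ i) (h4 : i < (as.drop e).sum) : d = e := by
  rcases lt_trichotomy d e with h | h | h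
  · have := sum_drop_antitone as (show d + 1 ≤ e by omega)
    omega
  · exact h
  · have := sum_drop_antitone as (show e + 1 ≤ d by omega)
    omega

lemma ownsSector_spine (as : List ℕ) (v : List ℕ) (i : ℕ) :
    OwnsSector (spine as) v i ↔ ∃ d, d < as.length ∧ v = List.replicate d 0 ∧
      (as.drop (d + 1)).sum ≤ i ∧ i < (as.drop d).sum := by
  constructor
  · rintro ⟨hint, hsec, hmax⟩
    obtain ⟨d, hd, rfl⟩ := (isInternalAt_spine as v).mp hint
    have h2 : i + 1 ≤ (as.drop d).sum := (sectorIn_spine as d i hd.le).mp hsec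
    refine ⟨d, hd, rfl, ?_, by omega⟩
    by_cases hde : d + 1 < as.length
    · have hni := hmax (List.replicate (d + 1) 0)
        ((isInternalAt_spine as _).mpr ⟨d + 1, hde, rfl⟩)
        (replicate_prefix_replicate (by omega))
        (by intro hc; have := congrArg List.length hc; simp at this)
      rw [sectorIn_spine as (d + 1) i (by omega)] at hni
      omega
    · have : as.drop (d + 1) = [] := List.drop_eq_nil_of_le (by omega)
      rw [this]
      exact Nat.zero_le i
  · rintro ⟨d, hd, rfl, hl, hu⟩
    refine ⟨(isInternalAt_spine as _).mpr ⟨d, hd, rfl⟩,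
      (sectorIn_spine as d i hd.le).mpr (by omega), ?_⟩
    intro w hw hpre hne
    obtain ⟨e, he, rfl⟩ := (isInternalAt_spine as w).mp hw
    have hdle : d ≤ e := by
      have := hpre.length_le
      simpa using this
    have hdlt : d + 1 ≤ e := by
      rcases Nat.lt_or_ge d e with h | h
      · omega
      · exfalso; apply hne; rw [show e = d by omega]
    rw [sectorIn_spine as e i he.le]
    have := sum_drop_antitone as hdlt
    omega

lemma sameOwner_spine (as : List ℕ) (i j : ℕ) :
    SameOwner (spine as) i j ↔ ∃ d, d < as.length ∧
      ((as.drop (d + 1)).sum ≤ i ∧ i < (as.drop d).sum) ∧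
      ((as.drop (d + 1)).sum ≤ j ∧ j < (as.drop d).sum) := by
  constructor
  · rintro ⟨v, hvi, hvj⟩
    obtain ⟨d, hd, rfl, h1, h2⟩ := (ownsSector_spine as v i).mp hvi
    obtain ⟨d', hd', heq, h1', h2'⟩ := (ownsSector_spine as _ j).mp hvj
    have hdd : d = d' := by
      have := congrArg List.length heq
      simpa using this
    subst hdd
    exact ⟨d, hd, ⟨h1, h2⟩, ⟨h1', h2'⟩⟩
  · rintro ⟨d, hd, hi, hj⟩
    exact ⟨List.replicate d 0, (ownsSector_spine as _ i).mpr ⟨d, hd, rfl, hi.1, hi.2⟩,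
      (ownsSector_spine as _ j).mpr ⟨d, hd, rfl, hj.1, hj.2⟩⟩


lemma corolla_eq_spine (m : ℕ) (hm : 1 ≤ m) : corolla m = spine [m - 1] := by
  show PTree.node _ = PTree.node _
  congr 1
  rw [show m = (m - 1) + 1 by omega, List.replicate_succ]
  simp [spine]

lemma graft_spine (as bs : List ℕ) :
    graftLeftmost (spine as) (spine bs) = spine (as ++ bs) := by
  induction as with
  | nil => rfl
  | cons a as ih =>
    show PTree.node (graftLeftmost (spine as) (spine bs) :: List.replicate a leaf) =
      PTree.node (spine (as ++ bs) :: List.replicate a leaf)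
    rw [ih]

lemma isBST_iff (t : PTree) : IsBST t ↔ ∃ as, (∀ a ∈ as, 1 ≤ a) ∧ t = spine as := by
  constructor
  · intro h
    induction h with
    | single => exact ⟨[], by simp, rfl⟩
    | graft t m ht hm ih =>
      obtain ⟨as, ha, rfl⟩ := ih
      refine ⟨as ++ [m - 1], ?_, ?_⟩
      · intro a haa
        rcases List.mem_append.mp haa with h' | h'
        · exact ha a h'
        · simp at h'; omega
      · rw [corolla_eq_spine m (by omega), graft_spine]
  · rintro ⟨as, ha, rfl⟩
    induction as using List.reverseRecOn with
    | nil => exact IsBST.single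
    | append_singleton as a ih =>
      rw [← graft_spine as [a]]
      have h1 : 1 ≤ a := ha a (by simp)
      have : spine [a] = corolla (a + 1) := by
        rw [corolla_eq_spine (a + 1) (by omega)]
        simp
      rw [this]
      exact IsBST.graft _ (a + 1) (ih (fun x hx => ha x (by simp [hx]))) (by omega)

lemma isSchroder_spine (as : List ℕ) (h : ∀ a ∈ as, 1 ≤ a) : IsSchroder (spine as) := by
  induction as with
  | nil => exact IsSchroder.leaf
  | cons a as ih =>
    apply IsSchroder.node
    · have : 1 ≤ a := h a (by simp)
      simp only [List.length_cons, List.length_replicate]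
      omega
    · intro c hc
      rcases List.mem_cons.mp hc with h' | h'
      · rw [h']; exact ih (fun x hx => h x (by simp [hx]))
      · rw [List.eq_of_mem_replicate h']; exact IsSchroder.leaf

lemma sameOwner_cons_restrict (a : ℕ) (as : List ℕ) (i j : ℕ)
    (hi : i < as.sum) (hj : j < as.sum) :
    SameOwner (spine (a :: as)) i j ↔ SameOwner (spine as) i j := by
  rw [sameOwner_spine, sameOwner_spine]
  constructor
  · rintro ⟨d, hd, hbi, hbj⟩
    cases d with
    | zero =>
      exfalso
      have : (List.drop 1 (a :: as)).sum ≤ i := hbi.1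
      simp only [List.drop_succ_cons, List.drop_zero] at this
      omega
    | succ e =>
      refine ⟨e, by simpa using hd, ?_, ?_⟩
      · simpa [List.drop_succ_cons] using hbi
      · simpa [List.drop_succ_cons] using hbj
  · rintro ⟨d, hd, hbi, hbj⟩
    exact ⟨d + 1, by simpa using hd, by simpa [List.drop_succ_cons] using hbi,
      by simpa [List.drop_succ_cons] using hbj⟩


lemma top_block (a : ℕ) (as : List ℕ) (ha : 1 ≤ a) (j : ℕ) (hj : j < (a :: as).sum) :
    SameOwner (spine (a :: as)) ((a :: as).sum - 1) j ↔ as.sum ≤ j := by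
  have hN : (a :: as).sum = a + as.sum := by simp
  rw [sameOwner_spine]
  constructor
  · rintro ⟨d, hd, hbi, hbj⟩
    cases d with
    | zero =>
      have : (List.drop 1 (a :: as)).sum ≤ j := by
        simpa using hbj.1
      simpa using this
    | succ e =>
      exfalso
      have h1 : ((a :: as).sum - 1) < (List.drop (e + 1) (a :: as)).sum := hbi.2
      have h2 : (List.drop (e + 1) (a :: as)).sum ≤ (List.drop 1 (a :: as)).sum :=
        sum_drop_antitone _ (by omega)
      simp only [List.drop_succ_cons, List.drop_zero] at h1 h2
      omega
  · intro h
    refine ⟨0, by simp, ?_, ?_⟩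
    · simp only [List.drop_succ_cons, List.drop_zero]
      constructor
      · omega
      · omega
    · simp only [List.drop_succ_cons, List.drop_zero]
      exact ⟨h, hj⟩

lemma spine_rel_ext (as1 : List ℕ) : ∀ (as2 : List ℕ), (∀ a ∈ as1, 1 ≤ a) →
    (∀ a ∈ as2, 1 ≤ a) → as1.sum = as2.sum →
    (∀ i j, i < as1.sum → j < as1.sum →
      (SameOwner (spine as1) i j ↔ SameOwner (spine as2) i j)) → as1 = as2 := by
  induction as1 with
  | nil =>
    intro as2 _ h2 hsum _
    cases as2 with
    | nil => rfl
    | cons b bs =>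
      exfalso
      have := h2 b (by simp)
      simp at hsum
      omega
  | cons a as ih =>
    intro as2 h1 h2 hsum hrel
    have ha : 1 ≤ a := h1 a (by simp)
    have hN : (a :: as).sum = a + as.sum := by simp
    cases as2 with
    | nil =>
      exfalso
      simp at hsum
      omega
    | cons b bs =>
      have hb : 1 ≤ b := h2 b (by simp)
      have hN2 : (b :: bs).sum = b + bs.sum := by simp
      have hNN : (a :: as).sum = (b :: bs).sum := hsum
      set N := (a :: as).sum with hNdef
      have hNpos : 1 ≤ N := by omega
      have key : ∀ j, j < N → (as.sum ≤ j ↔ bs.sum ≤ j) := by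
        intro j hjN
        rw [← top_block a as ha j hjN, hrel (N - 1) j (by omega) (by omega), hNN,
          top_block b bs hb j (by omega)]
      have hsums : as.sum = bs.sum := by
        have k1 := key as.sum (by omega)
        have k2 := key bs.sum (by omega)
        omega
      have hab : a = b := by omega
      subst hab
      have htail : as = bs := by
        apply ih bs (fun x hx => h1 x (by simp [hx])) (fun x hx => h2 x (by simp [hx])) hsums
        intro i j hi hj
        rw [← sameOwner_cons_restrict a as i j hi hj,
          hrel i j (by omega) (by omega),
          sameOwner_cons_restrict a bs i j (by omega) (by omega)]
      rw [htail]


noncomputable def osum (as : List ℕ) (i : ℕ) : ℕ :=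
  ((Finset.range (as.length + 1)).filter fun e => (as.drop e).sum ≤ i).card

lemma osum_owner (as : List ℕ) {d i : ℕ} (hd : d < as.length)
    (h1 : (as.drop (d + 1)).sum ≤ i) (h2 : i < (as.drop d).sum) :
    osum as i = as.length - d := by
  have hset : ((Finset.range (as.length + 1)).filter fun e => (as.drop e).sum ≤ i)
      = Finset.Ico (d + 1) (as.length + 1) := by
    ext e
    simp only [Finset.mem_filter, Finset.mem_range, Finset.mem_Ico]
    constructor
    · rintro ⟨he, hs⟩
      refine ⟨?_, he⟩
      by_contra hc
      push_neg at hc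
      have := sum_drop_antitone as (show e ≤ d by omega)
      omega
    · rintro ⟨hde, he⟩
      refine ⟨he, ?_⟩
      have := sum_drop_antitone as (show d + 1 ≤ e by omega)
      omega
  rw [osum, hset, Nat.card_Ico]
  omega

lemma osum_mono (as : List ℕ) {i j : ℕ} (h : i ≤ j) : osum as i ≤ osum as j := by
  apply Finset.card_le_card
  intro e he
  simp only [Finset.mem_filter, Finset.mem_range] at he ⊢
  exact ⟨he.1, le_trans he.2 h⟩

lemma sameOwner_iff_osum (as : List ℕ) (i j : ℕ) (hi : i < as.sum) (hj : j < as.sum) :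
    SameOwner (spine as) i j ↔ osum as i = osum as j := by
  rw [sameOwner_spine]
  constructor
  · rintro ⟨d, hd, hbi, hbj⟩
    rw [osum_owner as hd hbi.1 hbi.2, osum_owner as hd hbj.1 hbj.2]
  · intro h
    obtain ⟨d, hd, h1, h2⟩ := exists_owner as i hi
    obtain ⟨e, he, h3, h4⟩ := exists_owner as j hj
    have hde : as.length - d = as.length - e := by
      rw [← osum_owner as hd h1 h2, h, osum_owner as he h3 h4]
    have : d = e := by omega
    subst this
    exact ⟨d, hd, ⟨h1, h2⟩, ⟨h3, h4⟩⟩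

def ownerSetoid (as : List ℕ) (n : ℕ) : Setoid (Fin n) where
  r i j := osum as i.val = osum as j.val
  iseqv := ⟨fun _ => rfl, Eq.symm, Eq.trans⟩

noncomputable instance (as : List ℕ) (n : ℕ) : DecidableRel (ownerSetoid as n).r :=
  fun i j => inferInstanceAs (Decidable (osum as i.val = osum as j.val))

lemma part1 (n : ℕ) (as : List ℕ) (hsum : as.sum = n) :
    ∃ π : NPart n, IsIntervalPart π ∧ TreePartEq (spine as) π := by
  classical
  set π : NPart n := Finpartition.ofSetoid (ownerSetoid as n) with hπ
  have hmem : ∀ (a b : Fin n), b ∈ π.part a ↔ osum as a.val = osum as b.val := by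
    intro a b
    exact Finpartition.mem_part_ofSetoid_iff_rel
  refine ⟨π, ?_, ?_⟩
  · intro V hV x hx y hy z hxz hzy
    have hVx : π.part x = V := Finpartition.part_eq_of_mem (P := π) hV hx
    have hxy : osum as x.val = osum as y.val := by
      rw [← hmem x y, hVx]; exact hy
    have h1 : osum as x.val ≤ osum as z.val := osum_mono as hxz
    have h2 : osum as z.val ≤ osum as y.val := osum_mono as hzy
    have : osum as x.val = osum as z.val := by omega
    rw [← hVx, hmem x z]
    exact this
  · intro i j
    rw [sameOwner_iff_osum as i.val j.val (by rw [hsum]; exact i.isLt)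
      (by rw [hsum]; exact j.isLt)]
    constructor
    · intro h
      exact ⟨π.part i, π.part_mem.mpr (Finset.mem_univ i), π.mem_part (Finset.mem_univ i),
        (hmem i j).mpr h⟩
    · rintro ⟨V, hV, hiV, hjV⟩
      have hVi : π.part i = V := Finpartition.part_eq_of_mem (P := π) hV hiV
      rw [← hmem i j, hVi]
      exact hjV

lemma sum_drop_succ_lt (as : List ℕ) (h1 : ∀ a ∈ as, 1 ≤ a) {d : ℕ} (hd : d < as.length) :
    (as.drop (d + 1)).sum < (as.drop d).sum := by
  rw [List.drop_eq_getElem_cons hd, List.sum_cons]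
  have := h1 as[d] (as.getElem_mem hd)
  omega

lemma part3 (n : ℕ) (as : List ℕ) (h1 : ∀ a ∈ as, 1 ≤ a) (hsum : as.sum = n)
    (π : NPart n) (hTP : TreePartEq (spine as) π) :
    (spine as).numInternal = π.parts.card := by
  rw [numInternal_spine]
  have key : ∀ V ∈ π.parts, ∃ d, d < as.length ∧ ∀ x : Fin n, x ∈ V →
      ((as.drop (d + 1)).sum ≤ x.val ∧ x.val < (as.drop d).sum) := by
    intro V hV
    obtain ⟨x, hx⟩ := π.nonempty_of_mem_parts hV
    have hso : SameOwner (spine as) x.val x.val := (hTP x x).mpr ⟨V, hV, hx, hx⟩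
    obtain ⟨d, hd, hbx, -⟩ := (sameOwner_spine as _ _).mp hso
    refine ⟨d, hd, fun y hy => ?_⟩
    have hso2 : SameOwner (spine as) x.val y.val := (hTP x y).mpr ⟨V, hV, hx, hy⟩
    obtain ⟨d', hd', hbx', hby⟩ := (sameOwner_spine as _ _).mp hso2
    have : d' = d := owner_unique as hd' hd hbx'.1 hbx'.2 hbx.1 hbx.2
    subst this
    exact hby
  choose fd hfd1 hfd2 using key
  have hinj : ∀ (V : Finset (Fin n)) (hV : V ∈ π.parts) (W : Finset (Fin n))
      (hW : W ∈ π.parts), fd V hV = fd W hW → V = W := by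
    intro V hV W hW h
    obtain ⟨x, hx⟩ := π.nonempty_of_mem_parts hV
    obtain ⟨y, hy⟩ := π.nonempty_of_mem_parts hW
    have hbx := hfd2 V hV x hx
    have hby := hfd2 W hW y hy
    rw [h] at hbx
    have hso : SameOwner (spine as) x.val y.val :=
      (sameOwner_spine as _ _).mpr ⟨fd W hW, hfd1 W hW, hbx, hby⟩
    obtain ⟨U, hU, hxU, hyU⟩ := (hTP x y).mp hso
    rw [π.eq_of_mem_parts hV hU hx hxU, π.eq_of_mem_parts hW hU hy hyU]
  have hsurj : ∀ d ∈ Finset.range as.length, ∃ V, ∃ (hV : V ∈ π.parts), fd V hV = d := by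
    intro d hd
    rw [Finset.mem_range] at hd
    have hlt : (as.drop (d + 1)).sum < (as.drop d).sum := sum_drop_succ_lt as h1 hd
    have hlen : (as.drop d).sum ≤ n := by
      rw [← hsum]
      simpa using sum_drop_antitone as (Nat.zero_le d)
    set x : Fin n := ⟨(as.drop (d + 1)).sum, by omega⟩ with hxdef
    have hso : SameOwner (spine as) x.val x.val :=
      (sameOwner_spine as _ _).mpr ⟨d, hd, ⟨le_refl _, hlt⟩, ⟨le_refl _, hlt⟩⟩
    obtain ⟨V, hV, hxV, -⟩ := (hTP x x).mp hso
    refine ⟨V, hV, ?_⟩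
    have hbx := hfd2 V hV x hxV
    exact owner_unique as (hfd1 V hV) hd hbx.1 hbx.2 (le_refl _) hlt
  rw [← Finset.card_range as.length]
  exact (Finset.card_bij (fun V hV => fd V hV)
    (fun V hV => Finset.mem_range.mpr (hfd1 V hV)) hinj hsurj).symm



lemma min'_congr {α : Type*} [LinearOrder α] {s t : Finset α} (h : s = t) (Hs : s.Nonempty) :
    s.min' Hs = t.min' (h ▸ Hs) := by subst h; rfl

noncomputable def cv {n : ℕ} (π : NPart n) : ℕ → ℕ := fun i =>
  if h : i < n then
    ((π.part ⟨i, h⟩).min' ⟨⟨i, h⟩, π.mem_part (Finset.mem_univ _)⟩).val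
  else 0

lemma cv_fin {n : ℕ} (π : NPart n) (x : Fin n) :
    cv π x.val = ((π.part x).min' ⟨x, π.mem_part (Finset.mem_univ _)⟩).val := by
  rw [cv]
  simp only [x.isLt, dif_pos, Fin.eta]

lemma cv_le {n : ℕ} (π : NPart n) (i : ℕ) (h : i < n) : cv π i ≤ i := by
  have h2 : cv π (⟨i, h⟩ : Fin n).val =
      ((π.part ⟨i, h⟩).min' ⟨⟨i, h⟩, π.mem_part (Finset.mem_univ _)⟩).val := cv_fin π ⟨i, h⟩
  have h3 := Finset.min'_le (π.part ⟨i, h⟩) ⟨i, h⟩ (π.mem_part (Finset.mem_univ _))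
  exact h2.trans_le (Fin.le_def.mp h3)

lemma same_part_iff_cv {n : ℕ} (π : NPart n) (i j : Fin n) :
    (∃ V ∈ π.parts, i ∈ V ∧ j ∈ V) ↔ cv π i.val = cv π j.val := by
  constructor
  · rintro ⟨V, hV, hi, hj⟩
    have h1 : π.part i = V := Finpartition.part_eq_of_mem (P := π) hV hi
    have h2 : π.part j = V := Finpartition.part_eq_of_mem (P := π) hV hj
    rw [cv_fin, cv_fin]
    exact congrArg Fin.val (min'_congr (h1.trans h2.symm) _)
  · intro h
    rw [cv_fin, cv_fin] at h
    set m1 := (π.part i).min' ⟨i, π.mem_part (Finset.mem_univ _)⟩ with hm1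
    set m2 := (π.part j).min' ⟨j, π.mem_part (Finset.mem_univ _)⟩ with hm2
    have hm : m1 = m2 := Fin.ext h
    have hmem1 : m1 ∈ π.part i := Finset.min'_mem _ _
    have hmem2 : m2 ∈ π.part j := Finset.min'_mem _ _
    rw [← hm] at hmem2
    have : π.part i = π.part j := π.eq_of_mem_parts
      (π.part_mem.mpr (Finset.mem_univ i)) (π.part_mem.mpr (Finset.mem_univ j)) hmem1 hmem2
    exact ⟨π.part i, π.part_mem.mpr (Finset.mem_univ i), π.mem_part (Finset.mem_univ i),
      this ▸ π.mem_part (Finset.mem_univ j)⟩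

lemma cv_const {n : ℕ} (π : NPart n) (hint : IsIntervalPart π) (x : Fin n) (i : ℕ)
    (h1 : cv π x.val ≤ i) (h2 : i ≤ x.val) : cv π i = cv π x.val := by
  have hin : i < n := lt_of_le_of_lt h2 x.isLt
  set z : Fin n := ⟨i, hin⟩ with hz
  set m : Fin n := (π.part x).min' ⟨x, π.mem_part (Finset.mem_univ _)⟩ with hmdef
  have hmmem : m ∈ π.part x := Finset.min'_mem _ _
  have hxmem : x ∈ π.part x := π.mem_part (Finset.mem_univ _)
  have hzmem : z ∈ π.part x := by
    apply hint (π.part x) (π.part_mem.mpr (Finset.mem_univ x)) m hmmem x hxmem z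
    · show m ≤ z
      rw [Fin.le_def]
      rw [cv_fin] at h1
      exact h1
    · show z ≤ x
      rw [Fin.le_def]
      exact h2
  have hpart : π.part z = π.part x :=
    Finpartition.part_eq_of_mem (P := π) (π.part_mem.mpr (Finset.mem_univ x)) hzmem
  have : cv π z.val = cv π x.val := by
    rw [cv_fin, cv_fin]
    exact congrArg Fin.val (min'_congr hpart _)
  simpa using this

noncomputable def gseq {n : ℕ} (π : NPart n) : ℕ → ℕ
  | 0 => n
  | k + 1 => if gseq π k = 0 then 0 else cv π (gseq π k - 1)

lemma gseq_le {n : ℕ} (π : NPart n) (k : ℕ) : gseq π k ≤ n := by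
  induction k with
  | zero => exact le_refl n
  | succ k ih =>
    rw [gseq]
    split
    · omega
    · next h =>
      have hlt : gseq π k - 1 < n := by omega
      have := cv_le π (gseq π k - 1) hlt
      omega

lemma gseq_succ_lt {n : ℕ} (π : NPart n) (k : ℕ) (h : gseq π k ≠ 0) :
    gseq π (k + 1) < gseq π k := by
  rw [gseq, if_neg h]
  have hle := gseq_le π k
  have := cv_le π (gseq π k - 1) (by omega)
  omega

lemma gseq_succ_le {n : ℕ} (π : NPart n) (k : ℕ) : gseq π (k + 1) ≤ gseq π k := by
  by_cases h : gseq π k = 0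
  · rw [gseq, if_pos h]; omega
  · exact le_of_lt (gseq_succ_lt π k h)

lemma gseq_anti {n : ℕ} (π : NPart n) {k k' : ℕ} (h : k ≤ k') : gseq π k' ≤ gseq π k := by
  induction k' with
  | zero => have : k = 0 := by omega
            subst this; exact le_refl _
  | succ k' ih =>
    rcases Nat.lt_or_ge k (k' + 1) with h' | h'
    · exact le_trans (gseq_succ_le π k') (ih (by omega))
    · have : k = k' + 1 := by omega
      subst this; exact le_refl _

lemma gseq_exists_zero {n : ℕ} (π : NPart n) : ∃ k, gseq π k = 0 := by
  have key : ∀ k, gseq π k = 0 ∨ gseq π k + k ≤ n := by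
    intro k
    induction k with
    | zero => right; rw [show gseq π 0 = n from rfl]; omega
    | succ k ih =>
      by_cases hk : gseq π k = 0
      · left; rw [gseq, if_pos hk]
      · have := gseq_succ_lt π k hk
        rcases ih with h | h
        · exact absurd h hk
        · right; omega
  rcases key n with h | h
  · exact ⟨n, h⟩
  · exact ⟨n, by omega⟩

lemma part2_exists (n : ℕ) (π : NPart n) (hint : IsIntervalPart π) :
    ∃ as : List ℕ, (∀ a ∈ as, 1 ≤ a) ∧ as.sum = n ∧ TreePartEq (spine as) π := by
  classical
  set len := Nat.find (gseq_exists_zero π) with hlendef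
  have hglen : gseq π len = 0 := Nat.find_spec (gseq_exists_zero π)
  have hgne : ∀ d < len, gseq π d ≠ 0 := fun d hd => Nat.find_min (gseq_exists_zero π) hd
  set as : List ℕ := (List.range len).map (fun d => gseq π d - gseq π (d + 1)) with hasdef
  have hlen_as : as.length = len := by simp [hasdef]
  have hget : ∀ d (hd : d < len), as[d]'(by rw [hlen_as]; exact hd)
      = gseq π d - gseq π (d + 1) := by
    intro d hd
    simp [hasdef]
  have hS : ∀ m d, d ≤ len → len - d = m → (as.drop d).sum = gseq π d := by
    intro m
    induction m with
    | zero =>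
      intro d hd hm
      have : d = len := by omega
      subst this
      rw [List.drop_eq_nil_of_le (by omega), hglen]
      rfl
    | succ m ihm =>
      intro d hd hm
      have hdlt : d < len := by omega
      rw [List.drop_eq_getElem_cons (by rw [hlen_as]; exact hdlt), List.sum_cons,
        ihm (d + 1) (by omega) (by omega), hget d hdlt]
      have := gseq_succ_le π d
      omega
  have hS' : ∀ d, d ≤ len → (as.drop d).sum = gseq π d := fun d hd => hS (len - d) d hd rfl
  have hsum : as.sum = n := by
    have := hS' 0 (by omega)
    simpa [gseq] using this
  have hpos : ∀ a ∈ as, 1 ≤ a := by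
    intro a ha
    rw [hasdef] at ha
    simp only [List.mem_map, List.mem_range] at ha
    obtain ⟨d, hd, rfl⟩ := ha
    have := gseq_succ_lt π d (hgne d hd)
    omega
  have hinj : ∀ k k', k ≤ len → k' ≤ len → gseq π k = gseq π k' → k = k' := by
    intro k k' hk hk' h
    by_contra hne
    rcases Nat.lt_or_ge k k' with hlt | hge
    · have h1 := gseq_succ_lt π k (hgne k (by omega))
      have h2 := gseq_anti π (show k + 1 ≤ k' by omega)
      omega
    · have hlt : k' < k := by omega
      have h1 := gseq_succ_lt π k' (hgne k' (by omega))
      have h2 := gseq_anti π (show k' + 1 ≤ k by omega)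
      omega
  have hcvconst : ∀ d, d < len → ∀ i, gseq π (d + 1) ≤ i → i < gseq π d →
      cv π i = gseq π (d + 1) := by
    intro d hd i hi1 hi2
    have hgd := hgne d hd
    have hgdle := gseq_le π d
    have hxlt : gseq π d - 1 < n := by omega
    have hcvx : gseq π (d + 1) = cv π (gseq π d - 1) := by
      rw [gseq, if_neg hgd]
    rw [hcvx] at hi1 ⊢
    exact cv_const π hint ⟨gseq π d - 1, hxlt⟩ i hi1 (by show i ≤ gseq π d - 1; omega)
  refine ⟨as, hpos, hsum, ?_⟩
  intro i j
  rw [sameOwner_spine, same_part_iff_cv π i j]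
  constructor
  · rintro ⟨d, hd, hbi, hbj⟩
    rw [hlen_as] at hd
    rw [hS' (d + 1) (by omega), hS' d (by omega)] at hbi hbj
    rw [hcvconst d hd i.val hbi.1 hbi.2, hcvconst d hd j.val hbj.1 hbj.2]
  · intro hcv
    obtain ⟨d, hd, h1, h2⟩ := exists_owner as i.val (by rw [hsum]; exact i.isLt)
    obtain ⟨e, he, h3, h4⟩ := exists_owner as j.val (by rw [hsum]; exact j.isLt)
    rw [hlen_as] at hd he
    rw [hS' (d + 1) (by omega)] at h1
    rw [hS' d (by omega)] at h2
    rw [hS' (e + 1) (by omega)] at h3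
    rw [hS' e (by omega)] at h4
    have hcvi := hcvconst d hd i.val h1 h2
    have hcvj := hcvconst e he j.val h3 h4
    have : d + 1 = e + 1 := by
      apply hinj (d + 1) (e + 1) (by omega) (by omega)
      rw [← hcvi, ← hcvj, hcv]
    have hde : d = e := by omega
    subst hde
    refine ⟨d, by rw [hlen_as]; exact hd, ?_, ?_⟩
    · rw [hS' (d + 1) (by omega), hS' d (by omega)]
      exact ⟨h1, h2⟩
    · rw [hS' (d + 1) (by omega), hS' d (by omega)]
      exact ⟨h3, h4⟩

end BSTProof

/-- For every `n ≥ 1`, the map `t ↦ π(t)` is a bijection from `BST(n)`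
onto the set of interval partitions of `[n]`, and `i(t) = |π(t)|` for every `t ∈ BST(n)`.
Here `π(t) = π` is expressed by `TreePartEq t π` (the two partitions induce the same
same-block relation on the `n` sectors). -/
theorem BST_bij_interval_partitions (n : ℕ) (hn : 1 ≤ n) :
    (∀ t, PTree.IsBST t → t ∈ PTree.ST n →
        ∃ π : NPart n, IsIntervalPart π ∧ TreePartEq t π) ∧
    (∀ π : NPart n, IsIntervalPart π →
        ∃! t, (PTree.IsBST t ∧ t ∈ PTree.ST n) ∧ TreePartEq t π) ∧
    (∀ t, PTree.IsBST t → t ∈ PTree.ST n → ∀ π : NPart n, TreePartEq t π →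
        PTree.numInternal t = π.parts.card) := by
  refine ⟨?_, ?_, ?_⟩
  · intro t hBST hST
    obtain ⟨as, hpos, rfl⟩ := (BSTProof.isBST_iff t).mp hBST
    have hsum : as.sum = n := by
      have h2 := hST.2
      rw [BSTProof.numLeaves_spine] at h2
      omega
    exact BSTProof.part1 n as hsum
  · intro π hint
    obtain ⟨as, hpos, hsum, hTP⟩ := BSTProof.part2_exists n π hint
    refine ⟨BSTProof.spine as, ⟨⟨(BSTProof.isBST_iff _).mpr ⟨as, hpos, rfl⟩,
      ⟨BSTProof.isSchroder_spine as hpos, by rw [BSTProof.numLeaves_spine]; omega⟩⟩, hTP⟩, ?_⟩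
    rintro t' ⟨⟨hBST', hST'⟩, hTP'⟩
    obtain ⟨as', hpos', rfl⟩ := (BSTProof.isBST_iff t').mp hBST'
    have hsum' : as'.sum = n := by
      have h2 := hST'.2
      rw [BSTProof.numLeaves_spine] at h2
      omega
    have heq : as' = as := by
      apply BSTProof.spine_rel_ext as' as hpos' hpos (by omega)
      intro i j hi hj
      have hi' : i < n := by omega
      have hj' : j < n := by omega
      exact (hTP' ⟨i, hi'⟩ ⟨j, hj'⟩).trans (hTP ⟨i, hi'⟩ ⟨j, hj'⟩).symm
    rw [heq]
  · intro t hBST hST π hTP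
    obtain ⟨as, hpos, rfl⟩ := (BSTProof.isBST_iff t).mp hBST
    have hsum : as.sum = n := by
      have h2 := hST.2
      rw [BSTProof.numLeaves_spine] at h2
      omega
    exact BSTProof.part3 n as hpos hsum π hTP
end
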